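/- Suppose U is a unitary on (ℂ²)^{⊗(n−1)} with U|0⟩^{⊗(n−1−ℓ)}|1⟩^{⊗ℓ} = |D^{n−1}_ℓ⟩ for all 0 ≤ ℓ ≤ k, and S is a unitary on the last k+1 qubits (extended by identity on the first n−k−1 qubits) implementing the Split & Cyclic Shift map SCS_{n,k}. Then for all 0 ≤ ℓ ≤ k, (U ⊗ Id) · (Id^{⊗(n−k−1)} ⊗ S) maps |0⟩^{⊗(n−ℓ)}|1⟩^{⊗ℓ} to |D^n_ℓ⟩. -/
import Mathlib


open scoped BigOperators

def wt {n : ℕ} (x : Fin n → Bool) : ℕ := (Finset.univ.filter fun i => x i = true).card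

noncomputable def dicke (n k : ℕ) : (Fin n → Bool) → ℂ :=
  fun x => if wt x = k then (((Real.sqrt (n.choose k))⁻¹ : ℝ) : ℂ) else 0

/-- The length-`m` bitstring `|0⟩^{⊗(m-ℓ)}|1⟩^{⊗ℓ}` (last `ℓ` bits set). -/
def onesTail (m ℓ : ℕ) : Fin m → Bool := fun i => decide (m - ℓ ≤ (i : ℕ))

/-- The length-`k+1` bitstring `|0⟩^{⊗(k-ℓ)}|1⟩^{⊗ℓ}|0⟩`. -/
def onesShift (k ℓ : ℕ) : Fin (k + 1) → Bool := fun i => decide (k - ℓ ≤ (i : ℕ) ∧ (i : ℕ) < k)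

/-- Standard basis vector indexed by a bitstring. -/
def delta (m : ℕ) (s : Fin m → Bool) : (Fin m → Bool) → ℂ := fun x => if x = s then 1 else 0

/-- Glue a front part (first `m-k` bits) with a back part (last `k+1` bits) to a
bitstring of length `m+1` (assuming `k ≤ m`). -/
def glue (m k : ℕ) (h : k ≤ m) (f : Fin (m - k) → Bool) (z : Fin (k + 1) → Bool) :
    Fin (m + 1) → Bool :=
  fun i => if hi : (i : ℕ) < m - k then f ⟨i, hi⟩
    else z ⟨(i : ℕ) - (m - k), by have := i.isLt; omega⟩

/-- The operator `Id^{⊗(m-k)} ⊗ S` on `(ℂ²)^{⊗(m+1)}`, for `S` acting on the last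
`k+1` qubits. -/
def extendMid (m k : ℕ) (h : k ≤ m)
    (S : ((Fin (k + 1) → Bool) → ℂ) → ((Fin (k + 1) → Bool) → ℂ))
    (ψ : (Fin (m + 1) → Bool) → ℂ) : (Fin (m + 1) → Bool) → ℂ :=
  fun x =>
    S (fun z => ψ (glue m k h (fun i => x (Fin.castLE (by omega) i)) z))
      (fun j => x ⟨m - k + (j : ℕ), by have := j.isLt; omega⟩)

/-- The operator `U ⊗ Id` on `(ℂ²)^{⊗(m+1)}`, for `U` acting on the first `m` qubits. -/
def extendLast (m : ℕ)
    (U : ((Fin m → Bool) → ℂ) → ((Fin m → Bool) → ℂ))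
    (ψ : (Fin (m + 1) → Bool) → ℂ) : (Fin (m + 1) → Bool) → ℂ :=
  fun x => U (fun y => ψ (Fin.snoc y (x (Fin.last m)))) (fun i => x i.castSucc)

/-- The length-`m+1` bitstring `|0⟩^{⊗(m-ℓ)}|1⟩^{⊗ℓ}|0⟩`. -/
def onesMid (m ℓ : ℕ) : Fin (m + 1) → Bool := fun i => decide (m - ℓ ≤ (i : ℕ) ∧ (i : ℕ) < m)

lemma glue_eval_front (m k : ℕ) (hk : k ≤ m) (f : Fin (m - k) → Bool)
    (z : Fin (k + 1) → Bool) (i : Fin (m + 1)) (hi : (i : ℕ) < m - k) :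
    glue m k hk f z i = f ⟨(i : ℕ), hi⟩ := by
  simp only [glue]
  rw [dif_pos hi]

lemma glue_eval_back (m k : ℕ) (hk : k ≤ m) (f : Fin (m - k) → Bool)
    (z : Fin (k + 1) → Bool) (i : Fin (m + 1)) (hi : ¬ (i : ℕ) < m - k) :
    glue m k hk f z i = z ⟨(i : ℕ) - (m - k), by have := i.isLt; omega⟩ := by
  simp only [glue]
  rw [dif_neg hi]

lemma glue_eq_iff (m k : ℕ) (hk : k ≤ m) (f : Fin (m - k) → Bool) (z : Fin (k + 1) → Bool)
    (s : Fin (m + 1) → Bool) (s' : Fin (k + 1) → Bool)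
    (hfront : ∀ i : Fin (m + 1), (i : ℕ) < m - k → s i = false)
    (hback : ∀ j : Fin (k + 1), s ⟨m - k + (j : ℕ), by have := j.isLt; omega⟩ = s' j) :
    glue m k hk f z = s ↔ ((f = fun _ => false) ∧ z = s') := by
  constructor
  · intro h
    refine ⟨funext fun i => ?_, funext fun j => ?_⟩
    · have h1 := congrFun h (Fin.castLE (by omega) i)
      rw [glue_eval_front m k hk f z _ (by simpa using i.isLt),
        hfront _ (by simpa using i.isLt)] at h1
      simpa using h1
    · have h1 := congrFun h ⟨m - k + (j : ℕ), by have := j.isLt; omega⟩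
      rw [glue_eval_back m k hk f z _ (by exact Nat.not_lt.mpr (Nat.le_add_right _ _)),
        hback j] at h1
      have e : (⟨((⟨m - k + (j : ℕ), by have := j.isLt; omega⟩ : Fin (m + 1)) : ℕ) - (m - k),
          by have := j.isLt; omega⟩ : Fin (k + 1)) = j := Fin.ext (by simp)
      rwa [e] at h1
  · rintro ⟨rfl, rfl⟩
    funext i
    by_cases hi : (i : ℕ) < m - k
    · rw [glue_eval_front m k hk _ _ _ hi, hfront i hi]
    · rw [glue_eval_back m k hk _ _ _ hi]
      have h2 := hback ⟨(i : ℕ) - (m - k), by have := i.isLt; omega⟩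
      have e : (⟨m - k + ((i : ℕ) - (m - k)), by have := i.isLt; omega⟩ : Fin (m + 1)) = i :=
        Fin.ext (by simp; omega)
      rw [e] at h2
      exact h2.symm

lemma glue_apply_eq (m k : ℕ) (hk : k ≤ m) (x : Fin (m + 1) → Bool) :
    glue m k hk (fun i => x (Fin.castLE (by omega) i))
      (fun j => x ⟨m - k + (j : ℕ), by have := j.isLt; omega⟩) = x := by
  funext i
  by_cases hi : (i : ℕ) < m - k
  · rw [glue_eval_front m k hk _ _ i hi]
    exact congrArg x (Fin.ext (by simp))
  · rw [glue_eval_back m k hk _ _ i hi]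
    exact congrArg x (Fin.ext (by simp; omega))

lemma mid_eval_gen (m k : ℕ) (hk : k ≤ m)
    (S : ((Fin (k + 1) → Bool) → ℂ) →ₗ[ℂ] ((Fin (k + 1) → Bool) → ℂ))
    (s : Fin (m + 1) → Bool) (s' : Fin (k + 1) → Bool)
    (hfront : ∀ i : Fin (m + 1), (i : ℕ) < m - k → s i = false)
    (hback : ∀ j : Fin (k + 1), s ⟨m - k + (j : ℕ), by have := j.isLt; omega⟩ = s' j)
    (x : Fin (m + 1) → Bool) :
    extendMid m k hk (⇑S) (delta (m + 1) s) x =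
      if (fun i : Fin (m - k) => x (Fin.castLE (by omega) i)) = (fun _ => false)
      then S (delta (k + 1) s') (fun j => x ⟨m - k + (j : ℕ), by have := j.isLt; omega⟩)
      else 0 := by
  simp only [extendMid]
  by_cases hP : (fun i : Fin (m - k) => x (Fin.castLE (by omega : m - k ≤ m + 1) i)) =
      (fun _ => false)
  · rw [if_pos hP]
    have harg : (fun z => delta (m + 1) s
        (glue m k hk (fun i => x (Fin.castLE (by omega) i)) z)) = delta (k + 1) s' := by
      funext z
      simp only [delta]
      exact if_congr ((glue_eq_iff m k hk _ z s s' hfront hback).trans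
        (and_iff_right hP)) rfl rfl
    rw [harg]
  · rw [if_neg hP]
    have harg : (fun z => delta (m + 1) s
        (glue m k hk (fun i => x (Fin.castLE (by omega) i)) z)) = 0 := by
      funext z
      simp only [delta]
      rw [if_neg]
      · rfl
      · intro h
        exact hP ((glue_eq_iff m k hk _ z s s' hfront hback).mp h).1
    rw [harg, map_zero]
    rfl

lemma delta_split_gen (m k : ℕ) (hk : k ≤ m)
    (s : Fin (m + 1) → Bool) (s' : Fin (k + 1) → Bool)
    (hfront : ∀ i : Fin (m + 1), (i : ℕ) < m - k → s i = false)
    (hback : ∀ j : Fin (k + 1), s ⟨m - k + (j : ℕ), by have := j.isLt; omega⟩ = s' j)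
    (x : Fin (m + 1) → Bool) :
    (if (fun i : Fin (m - k) => x (Fin.castLE (by omega) i)) = (fun _ => false)
      then delta (k + 1) s' (fun j => x ⟨m - k + (j : ℕ), by have := j.isLt; omega⟩)
      else 0) = delta (m + 1) s x := by
  have hiff : x = s ↔
      ((fun i : Fin (m - k) => x (Fin.castLE (by omega : m - k ≤ m + 1) i)) = (fun _ => false)
        ∧ (fun j : Fin (k + 1) => x ⟨m - k + (j : ℕ), by have := j.isLt; omega⟩) = s') := by
    rw [← glue_eq_iff m k hk _ _ s s' hfront hback]
    constructor
    · intro h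
      exact (glue_apply_eq m k hk x).trans h
    · intro h
      exact (glue_apply_eq m k hk x).symm.trans h
  by_cases hP : (fun i : Fin (m - k) => x (Fin.castLE (by omega : m - k ≤ m + 1) i)) =
      (fun _ => false)
  · rw [if_pos hP]
    simp only [delta]
    exact if_congr ((and_iff_right hP).symm.trans hiff.symm) rfl rfl
  · rw [if_neg hP]
    simp only [delta]
    rw [if_neg]
    intro h
    exact hP (hiff.mp h).1

lemma snoc_eq_iff {m : ℕ} (y : Fin m → Bool) (b : Bool) (s : Fin (m + 1) → Bool) :
    Fin.snoc y b = s ↔ (b = s (Fin.last m) ∧ y = fun i => s i.castSucc) := by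
  constructor
  · rintro rfl
    refine ⟨?_, funext fun i => ?_⟩ <;> simp
  · rintro ⟨rfl, rfl⟩
    exact Fin.snoc_init_self s

lemma delta_snoc (m : ℕ) (s : Fin (m + 1) → Bool) (b : Bool) :
    (fun y : Fin m → Bool => delta (m + 1) s (Fin.snoc y b)) =
      if b = s (Fin.last m) then delta m (fun i => s i.castSucc) else 0 := by
  funext y
  by_cases hb : b = s (Fin.last m)
  · rw [if_pos hb]
    simp only [delta]
    exact if_congr ((snoc_eq_iff y b s).trans (and_iff_right hb)) rfl rfl
  · rw [if_neg hb]
    simp only [delta]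
    rw [if_neg]
    · rfl
    · intro h
      exact hb ((snoc_eq_iff y b s).mp h).1

lemma wt_snoc' {m : ℕ} (x : Fin (m + 1) → Bool) :
    wt x = wt (fun i : Fin m => x i.castSucc) + (if x (Fin.last m) = true then 1 else 0) := by
  simp only [wt, Finset.card_filter]
  exact Fin.sum_univ_castSucc (fun i => if x i = true then 1 else 0)

lemma sqrt_helper (a b c d : ℝ) (hc : 0 < c) (hd : 0 < d) (hb : 0 < b) (ha : 0 ≤ a)
    (h : a * d = b * c) :
    Real.sqrt (a / b) * (Real.sqrt c)⁻¹ = (Real.sqrt d)⁻¹ := by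
  have h1 : a / b = c / d := by
    rw [div_eq_div_iff hb.ne' hd.ne']
    linarith
  rw [h1, Real.sqrt_div hc.le d, div_eq_mul_inv, mul_right_comm,
    mul_inv_cancel₀ (Real.sqrt_ne_zero'.mpr hc), one_mul]

/-- Inductive step: if the unitary `U` on `m = n-1` qubits prepares the Dicke states
`|D^{n-1}_ℓ⟩` for `ℓ ≤ k`, and `S` is a unitary implementing `SCS_{n,k}` on the last
`k+1` qubits, then `(U ⊗ Id) · (Id^{⊗(n-k-1)} ⊗ S)` maps
`|0⟩^{⊗(n-ℓ)}|1⟩^{⊗ℓ}` to `|D^n_ℓ⟩` for all `ℓ ≤ k` (here `n = m+1`). -/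
theorem dicke_inductive_step (m k : ℕ) (hk1 : 1 ≤ k) (hk : k ≤ m)
    (U : ((Fin m → Bool) → ℂ) →ₗ[ℂ] ((Fin m → Bool) → ℂ))
    (S : ((Fin (k + 1) → Bool) → ℂ) →ₗ[ℂ] ((Fin (k + 1) → Bool) → ℂ))
    (hUunitary : ∀ φ χ : (Fin m → Bool) → ℂ,
      ∑ x : Fin m → Bool, (starRingEnd ℂ) (U φ x) * U χ x =
        ∑ x : Fin m → Bool, (starRingEnd ℂ) (φ x) * χ x)
    (hSunitary : ∀ φ χ : (Fin (k + 1) → Bool) → ℂ,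
      ∑ x : Fin (k + 1) → Bool, (starRingEnd ℂ) (S φ x) * S χ x =
        ∑ x : Fin (k + 1) → Bool, (starRingEnd ℂ) (φ x) * χ x)
    (hU : ∀ ℓ : ℕ, ℓ ≤ k → U (delta m (onesTail m ℓ)) = dicke m ℓ)
    (hS0 : S (delta (k + 1) (onesTail (k + 1) 0)) = delta (k + 1) (onesTail (k + 1) 0))
    (hS1 : S (delta (k + 1) (onesTail (k + 1) (k + 1))) =
      delta (k + 1) (onesTail (k + 1) (k + 1)))
    (hS : ∀ ℓ : ℕ, 1 ≤ ℓ → ℓ ≤ k →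
      S (delta (k + 1) (onesTail (k + 1) ℓ)) =
        ((Real.sqrt ((ℓ : ℝ) / (m + 1)) : ℝ) : ℂ) • delta (k + 1) (onesTail (k + 1) ℓ)
          + ((Real.sqrt (((m : ℝ) + 1 - ℓ) / (m + 1)) : ℝ) : ℂ) • delta (k + 1) (onesShift k ℓ)) :
    ∀ ℓ : ℕ, ℓ ≤ k →
      extendLast m (⇑U) (extendMid m k hk (⇑S) (delta (m + 1) (onesTail (m + 1) ℓ))) =
        dicke (m + 1) ℓ := by
  intro ℓ hℓ
  have hℓm : ℓ ≤ m := le_trans hℓ hk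
  have hfrontT : ∀ i : Fin (m + 1), (i : ℕ) < m - k → onesTail (m + 1) ℓ i = false := by
    intro i hi
    simp only [onesTail, decide_eq_false_iff_not]
    omega
  have hbackT : ∀ j : Fin (k + 1),
      onesTail (m + 1) ℓ ⟨m - k + (j : ℕ), by have := j.isLt; omega⟩ = onesTail (k + 1) ℓ j := by
    intro j
    simp only [onesTail]
    exact decide_eq_decide.mpr (by have := j.isLt; simp; omega)
  rcases Nat.eq_zero_or_pos ℓ with rfl | hℓ1
  · -- ℓ = 0
    have hmid : extendMid m k hk (⇑S) (delta (m + 1) (onesTail (m + 1) 0)) =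
        delta (m + 1) (onesTail (m + 1) 0) := by
      funext w
      rw [mid_eval_gen m k hk S _ _ hfrontT hbackT w, hS0,
        delta_split_gen m k hk _ _ hfrontT hbackT w]
    rw [hmid]
    funext x
    simp only [extendLast]
    have hlast : onesTail (m + 1) 0 (Fin.last m) = false := by
      simp only [onesTail, Fin.val_last, decide_eq_false_iff_not]
      omega
    have hinit : (fun i : Fin m => onesTail (m + 1) 0 i.castSucc) = onesTail m 0 := by
      funext i
      simp only [onesTail, Fin.coe_castSucc]
      exact decide_eq_decide.mpr (by have := i.isLt; omega)
    rw [delta_snoc m (onesTail (m + 1) 0) (x (Fin.last m)), hlast, hinit]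
    rcases hbx : x (Fin.last m) with _ | _
    · rw [if_pos rfl, hU 0 (Nat.zero_le k)]
      have hwt : wt x = wt (fun i : Fin m => x i.castSucc) := by
        rw [wt_snoc' x]
        simp [hbx]
      simp only [dicke, hwt, Nat.choose_zero_right]
    · rw [if_neg (by simp), map_zero]
      have hwt : wt x ≠ 0 := by
        rw [wt_snoc' x]
        simp [hbx]
      simp [dicke, hwt]
  · -- 1 ≤ ℓ
    have hfrontM : ∀ i : Fin (m + 1), (i : ℕ) < m - k → onesMid m ℓ i = false := by
      intro i hi
      simp only [onesMid, decide_eq_false_iff_not]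
      omega
    have hbackM : ∀ j : Fin (k + 1),
        onesMid m ℓ ⟨m - k + (j : ℕ), by have := j.isLt; omega⟩ = onesShift k ℓ j := by
      intro j
      simp only [onesMid, onesShift]
      exact decide_eq_decide.mpr (by have := j.isLt; simp; omega)
    have hmid : extendMid m k hk (⇑S) (delta (m + 1) (onesTail (m + 1) ℓ)) =
        ((Real.sqrt ((ℓ : ℝ) / (m + 1)) : ℝ) : ℂ) • delta (m + 1) (onesTail (m + 1) ℓ)
          + ((Real.sqrt (((m : ℝ) + 1 - ℓ) / (m + 1)) : ℝ) : ℂ) • delta (m + 1) (onesMid m ℓ) := by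
      funext w
      rw [mid_eval_gen m k hk S _ _ hfrontT hbackT w, hS ℓ hℓ1 hℓ]
      simp only [Pi.add_apply, Pi.smul_apply, smul_eq_mul]
      by_cases hP : (fun i : Fin (m - k) => w (Fin.castLE (by omega : m - k ≤ m + 1) i)) =
          (fun _ => false)
      · rw [← delta_split_gen m k hk _ _ hfrontT hbackT w,
          ← delta_split_gen m k hk _ _ hfrontM hbackM w,
          if_pos hP, if_pos hP, if_pos hP]
      · rw [← delta_split_gen m k hk _ _ hfrontT hbackT w,
          ← delta_split_gen m k hk _ _ hfrontM hbackM w,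
          if_neg hP, if_neg hP, if_neg hP]
        ring
    rw [hmid]
    funext x
    simp only [extendLast]
    have hsplit : (fun y : Fin m → Bool =>
        (((Real.sqrt ((ℓ : ℝ) / (m + 1)) : ℝ) : ℂ) • delta (m + 1) (onesTail (m + 1) ℓ)
          + ((Real.sqrt (((m : ℝ) + 1 - ℓ) / (m + 1)) : ℝ) : ℂ) • delta (m + 1) (onesMid m ℓ))
          (Fin.snoc y (x (Fin.last m)))) =
        ((Real.sqrt ((ℓ : ℝ) / (m + 1)) : ℝ) : ℂ) •
          (fun y : Fin m → Bool => delta (m + 1) (onesTail (m + 1) ℓ) (Fin.snoc y (x (Fin.last m))))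
        + ((Real.sqrt (((m : ℝ) + 1 - ℓ) / (m + 1)) : ℝ) : ℂ) •
          (fun y : Fin m → Bool => delta (m + 1) (onesMid m ℓ) (Fin.snoc y (x (Fin.last m)))) := rfl
    rw [hsplit, delta_snoc, delta_snoc]
    have hlastT : onesTail (m + 1) ℓ (Fin.last m) = true := by
      simp only [onesTail, Fin.val_last, decide_eq_true_eq]
      omega
    have hinitT : (fun i : Fin m => onesTail (m + 1) ℓ i.castSucc) = onesTail m (ℓ - 1) := by
      funext i
      simp only [onesTail, Fin.coe_castSucc]
      exact decide_eq_decide.mpr (by have := i.isLt; omega)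
    have hlastM : onesMid m ℓ (Fin.last m) = false := by
      simp only [onesMid, Fin.val_last, decide_eq_false_iff_not]
      omega
    have hinitM : (fun i : Fin m => onesMid m ℓ i.castSucc) = onesTail m ℓ := by
      funext i
      simp only [onesMid, onesTail, Fin.coe_castSucc]
      exact decide_eq_decide.mpr (by have := i.isLt; omega)
    rw [hlastT, hinitT, hlastM, hinitM]
    have hcpos : 0 < ((m + 1).choose ℓ : ℝ) := by
      exact_mod_cast Nat.choose_pos (by omega : ℓ ≤ m + 1)
    rcases hbx : x (Fin.last m) with _ | _
    · -- last bit false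
      rw [if_neg (by simp), if_pos rfl, smul_zero, zero_add, map_smul, hU ℓ hℓ]
      simp only [Pi.smul_apply, smul_eq_mul]
      have hwt : wt x = wt (fun i : Fin m => x i.castSucc) := by
        rw [wt_snoc' x]
        simp [hbx]
      simp only [dicke, hwt]
      by_cases h : wt (fun i : Fin m => x i.castSucc) = ℓ
      · rw [if_pos h, if_pos h, ← Complex.ofReal_mul]
        congr 1
        apply sqrt_helper
        · exact_mod_cast Nat.choose_pos hℓm
        · exact hcpos
        · positivity
        · have : (ℓ : ℝ) ≤ m := by exact_mod_cast hℓm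
          linarith
        · have hnat := Nat.choose_mul_succ_eq m ℓ
          have hcast := congrArg (Nat.cast : ℕ → ℝ) hnat
          push_cast [Nat.cast_sub (by omega : ℓ ≤ m + 1)] at hcast
          linarith
      · rw [if_neg h, if_neg h, mul_zero]
    · -- last bit true
      rw [if_pos rfl, if_neg (by simp), smul_zero, add_zero, map_smul,
        hU (ℓ - 1) (by omega)]
      simp only [Pi.smul_apply, smul_eq_mul]
      have hwt : wt x = wt (fun i : Fin m => x i.castSucc) + 1 := by
        rw [wt_snoc' x]
        simp [hbx]
      simp only [dicke, hwt]
      by_cases h : wt (fun i : Fin m => x i.castSucc) = ℓ - 1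
      · rw [if_pos h, if_pos (by omega), ← Complex.ofReal_mul]
        congr 1
        apply sqrt_helper
        · exact_mod_cast Nat.choose_pos (by omega : ℓ - 1 ≤ m)
        · exact hcpos
        · positivity
        · positivity
        · have hnat : (m + 1) * m.choose (ℓ - 1) = (m + 1).choose ℓ * ℓ := by
            have h2 := Nat.add_one_mul_choose_eq m (ℓ - 1)
            have h3 : ℓ - 1 + 1 = ℓ := by omega
            simpa [Nat.succ_eq_add_one, h3] using h2
          have hcast := congrArg (Nat.cast : ℕ → ℝ) hnat
          push_cast at hcast
          linarith
      · rw [if_neg h, if_neg (by omega), mul_zero]
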